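/- For every α ∈ (0,2), every k ∈ {0,1,2}, and every s > 0, one has 0 ≤ ∫₀^∞ t^k·e^{−st}·γ(t) dt ≤ (2·√(2α)·(2−α)·Γ(k+1+α)/(α·π))·s^{−k−1−α}. In particular, the Laplace transform G(s) = ∫₀^∞ e^{−st}γ(t) dt satisfies G(s) ≤ (2·√(2α)·(2−α)·Γ(1+α)/(α·π))·s^{−1−α}. -/

import Mathlib

open MeasureTheory Real Set
open scoped ENNReal NNReal

/-- The density `γ` from Kwaśnicki's formula for eigenfunctions on the half-line;
the integrand in the exponent has a removable singularity at `r = 1/s` (a single point,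
hence negligible for the Lebesgue integral). -/
noncomputable def gammaFn (α : ℝ) (s : ℝ) : ℝ :=
  Real.sqrt (2 * α) * Real.sin (α * π / 2) / (2 * π) *
      (s ^ α / (1 + s ^ (2 * α) - 2 * s ^ α * Real.cos (α * π / 2))) *
    Real.exp ((1 / π) * ∫ r in Set.Ioi (0 : ℝ),
      (1 + r ^ 2)⁻¹ * Real.log ((1 - r ^ α * s ^ α) / (1 - r ^ 2 * s ^ 2)))

/-- `G` is the Laplace transform of `γ`. -/
noncomputable def GFn (α : ℝ) (s : ℝ) : ℝ :=
  ∫ t in Set.Ioi (0 : ℝ), Real.exp (-s * t) * gammaFn α t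

/-- The generalized eigenfunction profile on the half-line:
`F(s) = sin(s + (2−α)π/8) − G(s)` for `s > 0`, and `F(s) = 0` for `s ≤ 0`. -/
noncomputable def FFn (α : ℝ) (s : ℝ) : ℝ :=
  if 0 < s then Real.sin (s + (2 - α) * π / 8) - GFn α s else 0

/-- The auxiliary cut-off function `q`. -/
noncomputable def qFn (x : ℝ) : ℝ :=
  if x ≤ -(1/3) then 0
  else if x ≤ 0 then 9/2 * (x + 1/3) ^ 2
  else if x ≤ 1/3 then 1 - 9/2 * (x - 1/3) ^ 2
  else 1

/-- `μ_n = nπ/2 − (2−α)π/8`. -/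
noncomputable def muN (α : ℝ) (n : ℕ) : ℝ := n * π / 2 - (2 - α) * π / 8

/-- The approximate eigenfunction
`φ̃_n(x) = q(−x)·F(μ_n(1+x)) + (−1)^n·q(x)·F(μ_n(1−x))`. -/
noncomputable def phiTilde (α : ℝ) (n : ℕ) (x : ℝ) : ℝ :=
  qFn (-x) * FFn α (muN α n * (1 + x)) + (-1 : ℝ) ^ n * qFn x * FFn α (muN α n * (1 - x))

/-!
Write `x = t^α` and `θ = απ/2`. The denominator of `γ(t)` is `(x - cos θ)² + sin² θ > 0`, and the
exponential factor is at most `1` since `(1 - u^α)/(1 - u²) ∈ [0, 1]` for `u > 0` when `α ≤ 2`.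
Jordan's inequality `sin θ ≥ α` (for `α ≤ 1`), resp. `sin θ ≤ π - θ` together with `cos θ ≤ 0`
(for `α > 1`), gives `α sin θ ≤ 4(2 - α)((x - cos θ)² + sin² θ)`, hence
`0 ≤ γ(t) ≤ 2√(2α)(2 - α)/(απ) · t^α`; the moments of `t^α e^{-st}` are Gamma integrals.
-/
lemma log_one_sub_rpow_div_one_sub_sq_nonpos {α x : ℝ} (hα₀ : 0 ≤ α) (hα₂ : α ≤ 2)
    (hx : 0 < x) : Real.log ((1 - x ^ α) / (1 - x ^ 2)) ≤ 0 := by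
  rcases lt_trichotomy x 1 with hx1 | rfl | hx1
  · have hxα : x ^ α ≤ 1 := Real.rpow_le_one hx.le hx1.le hα₀
    have hx2 : x ^ (2 : ℝ) ≤ x ^ α := Real.rpow_le_rpow_of_exponent_ge hx hx1.le hα₂
    rw [Real.rpow_two] at hx2
    have hx2' : x ^ 2 < 1 := by nlinarith
    exact Real.log_nonpos (div_nonneg (by linarith) (by linarith))
      ((div_le_one (by linarith)).2 (by linarith))
  · simp
  · have hxα : 1 ≤ x ^ α := Real.one_le_rpow hx1.le hα₀
    have hx2 : x ^ α ≤ x ^ (2 : ℝ) := Real.rpow_le_rpow_of_exponent_le hx1.le hα₂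
    rw [Real.rpow_two] at hx2
    have hx2' : 1 < x ^ 2 := by nlinarith
    rw [← neg_div_neg_eq, neg_sub, neg_sub]
    exact Real.log_nonpos (div_nonneg (by linarith) (by linarith))
      ((div_le_one (by linarith)).2 (by linarith))

lemma setIntegral_log_kernel_nonpos {α t : ℝ} (hα₀ : 0 ≤ α) (hα₂ : α ≤ 2) (ht : 0 < t) :
    ∫ r in Set.Ioi (0 : ℝ),
      (1 + r ^ 2)⁻¹ * Real.log ((1 - r ^ α * t ^ α) / (1 - r ^ 2 * t ^ 2)) ≤ 0 := by
  refine setIntegral_nonpos measurableSet_Ioi fun r (hr : 0 < r) => ?_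
  rw [← Real.mul_rpow hr.le ht.le, ← mul_pow]
  exact mul_nonpos_of_nonneg_of_nonpos (by positivity)
    (log_one_sub_rpow_div_one_sub_sq_nonpos hα₀ hα₂ (mul_pos hr ht))

lemma one_add_sq_sub_two_mul_cos_eq (x θ : ℝ) :
    1 + x ^ 2 - 2 * x * Real.cos θ = (x - Real.cos θ) ^ 2 + Real.sin θ ^ 2 := by
  nlinarith [Real.sin_sq_add_cos_sq θ]

lemma sin_mul_pi_div_two_pos {α : ℝ} (hα : α ∈ Set.Ioo (0 : ℝ) 2) : 0 < Real.sin (α * π / 2) :=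
  Real.sin_pos_of_pos_of_lt_pi (by nlinarith [hα.1, Real.pi_pos]) (by nlinarith [hα.2, Real.pi_pos])

lemma mul_sin_le_four_mul_one_add_sq_sub_two_mul_cos {α x : ℝ} (hα : α ∈ Set.Ioo (0 : ℝ) 2)
    (hx : 0 ≤ x) :
    α * Real.sin (α * π / 2) ≤ 4 * (2 - α) * (1 + x ^ 2 - 2 * x * Real.cos (α * π / 2)) := by
  have hsin := sin_mul_pi_div_two_pos hα
  obtain ⟨hα₀, hα₂⟩ := hα
  have hθ₀ : 0 < α * π / 2 := by positivity
  rw [one_add_sq_sub_two_mul_cos_eq]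
  rcases le_or_gt α 1 with hα₁ | hα₁
  · have hjordan : α ≤ Real.sin (α * π / 2) := by
      have h := Real.mul_le_sin hθ₀.le (by nlinarith [Real.pi_pos])
      rwa [show 2 / π * (α * π / 2) = α by field_simp] at h
    nlinarith [sq_nonneg (x - Real.cos (α * π / 2))]
  · have hcos : Real.cos (α * π / 2) ≤ 0 :=
      Real.cos_nonpos_of_pi_div_two_le_of_le (by nlinarith [Real.pi_pos])
        (by nlinarith [Real.pi_pos])
    have hsin_le : Real.sin (α * π / 2) ≤ (2 - α) * π / 2 := by
      rw [← Real.sin_pi_sub, show π - α * π / 2 = (2 - α) * π / 2 by ring]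
      exact (Real.sin_lt (by nlinarith [Real.pi_pos])).le
    have hD : 1 ≤ (x - Real.cos (α * π / 2)) ^ 2 + Real.sin (α * π / 2) ^ 2 := by
      nlinarith [Real.sin_sq_add_cos_sq (α * π / 2), mul_nonneg hx (neg_nonneg.2 hcos)]
    nlinarith [mul_le_mul_of_nonneg_left hsin_le hα₀.le, Real.pi_le_four,
      mul_le_mul_of_nonneg_left hD (by linarith : (0 : ℝ) ≤ 2 - α)]

section gammaFn

variable {α t : ℝ}

lemma gammaFn_denom_pos (hα : α ∈ Set.Ioo (0 : ℝ) 2) (ht : 0 < t) :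
    0 < 1 + t ^ (2 * α) - 2 * t ^ α * Real.cos (α * π / 2) := by
  rw [mul_comm 2 α, Real.rpow_mul ht.le, Real.rpow_two, one_add_sq_sub_two_mul_cos_eq]
  have := sin_mul_pi_div_two_pos hα
  positivity

lemma gammaFn_nonneg (hα : α ∈ Set.Ioo (0 : ℝ) 2) (ht : 0 < t) : 0 ≤ gammaFn α t := by
  have := sin_mul_pi_div_two_pos hα
  have := gammaFn_denom_pos hα ht
  unfold gammaFn
  positivity

lemma gammaFn_le_mul_rpow (hα : α ∈ Set.Ioo (0 : ℝ) 2) (ht : 0 < t) :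
    gammaFn α t ≤ 2 * Real.sqrt (2 * α) * (2 - α) / (α * π) * t ^ α := by
  have hD := gammaFn_denom_pos hα ht
  have hkey := mul_sin_le_four_mul_one_add_sq_sub_two_mul_cos hα (Real.rpow_nonneg ht.le α)
  rw [← Real.rpow_two, ← Real.rpow_mul ht.le, mul_comm α 2] at hkey
  have hexp : Real.exp ((1 / π) * ∫ r in Set.Ioi (0 : ℝ),
      (1 + r ^ 2)⁻¹ * Real.log ((1 - r ^ α * t ^ α) / (1 - r ^ 2 * t ^ 2))) ≤ 1 :=
    Real.exp_le_one_iff.2 <| mul_nonpos_of_nonneg_of_nonpos (by positivity)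
      (setIntegral_log_kernel_nonpos hα.1.le hα.2.le ht)
  have hsin := sin_mul_pi_div_two_pos hα
  have hα₀ := hα.1
  have hxα : 0 < t ^ α := Real.rpow_pos_of_pos ht α
  calc gammaFn α t
      ≤ Real.sqrt (2 * α) * Real.sin (α * π / 2) / (2 * π) *
          (t ^ α / (1 + t ^ (2 * α) - 2 * t ^ α * Real.cos (α * π / 2))) :=
        mul_le_of_le_one_right (by positivity) hexp
    _ ≤ 2 * Real.sqrt (2 * α) * (2 - α) / (α * π) * t ^ α := by
        rw [div_mul_div_comm, div_mul_eq_mul_div,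
          div_le_div_iff₀ (by positivity) (by positivity)]
        have := mul_le_mul_of_nonneg_left hkey
          (by positivity : 0 ≤ Real.sqrt (2 * α) * t ^ α * π)
        nlinarith

lemma measurable_gammaFn : Measurable (gammaFn α) := by
  have hkernel : StronglyMeasurable fun p : ℝ × ℝ =>
      (1 + p.2 ^ 2)⁻¹ * Real.log ((1 - p.2 ^ α * p.1 ^ α) / (1 - p.2 ^ 2 * p.1 ^ 2)) := by
    apply Measurable.stronglyMeasurable
    fun_prop
  have hI := (hkernel.integral_prod_right' (ν := volume.restrict (Set.Ioi (0 : ℝ)))).measurable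
  unfold gammaFn
  fun_prop

end gammaFn

lemma integrableOn_rpow_mul_exp_neg_mul {a s : ℝ} (ha : -1 < a) (hs : 0 < s) :
    IntegrableOn (fun t : ℝ => t ^ a * Real.exp (-(s * t))) (Set.Ioi 0) := by
  simpa only [Real.rpow_one, neg_mul] using integrableOn_rpow_mul_exp_neg_mul_rpow ha one_pos hs

section LaplaceMoments

variable {f : ℝ → ℝ} {C β s : ℝ}

lemma pow_mul_exp_mul_le_of_le_rpow (k : ℕ) {t : ℝ} (ht : 0 < t) (hfC : f t ≤ C * t ^ β) :
    t ^ k * Real.exp (-s * t) * f t ≤ C * (t ^ ((k : ℝ) + β) * Real.exp (-(s * t))) := by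
  rw [Real.rpow_add ht, Real.rpow_natCast, ← neg_mul]
  calc t ^ k * Real.exp (-s * t) * f t ≤ t ^ k * Real.exp (-s * t) * (C * t ^ β) := by
        gcongr
    _ = C * (t ^ k * t ^ β * Real.exp (-s * t)) := by ring

lemma integrableOn_pow_mul_exp_mul_of_le_rpow (k : ℕ) (hf : Measurable f) (hβ : -1 < β)
    (hs : 0 < s) (hf₀ : ∀ t > 0, 0 ≤ f t) (hfC : ∀ t > 0, f t ≤ C * t ^ β) :
    IntegrableOn (fun t => t ^ k * Real.exp (-s * t) * f t) (Set.Ioi 0) := by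
  have hdom := (integrableOn_rpow_mul_exp_neg_mul
    (show -1 < (k : ℝ) + β by linarith [k.cast_nonneg (α := ℝ)]) hs).const_mul C
  refine hdom.mono' (by fun_prop) ((ae_restrict_iff' measurableSet_Ioi).2 <|
    ae_of_all _ fun t (ht : 0 < t) => ?_)
  rw [Real.norm_eq_abs, abs_of_nonneg (by have := hf₀ t ht; positivity)]
  exact pow_mul_exp_mul_le_of_le_rpow k ht (hfC t ht)

lemma setIntegral_pow_mul_exp_mul_le_of_le_rpow (k : ℕ) (hf : Measurable f) (hβ : -1 < β)
    (hs : 0 < s) (hf₀ : ∀ t > 0, 0 ≤ f t) (hfC : ∀ t > 0, f t ≤ C * t ^ β) :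
    ∫ t in Set.Ioi (0 : ℝ), t ^ k * Real.exp (-s * t) * f t ≤
      C * Real.Gamma (k + 1 + β) * s ^ (-(k : ℝ) - 1 - β) := by
  have hkβ : -1 < (k : ℝ) + β := by linarith [k.cast_nonneg (α := ℝ)]
  have hgamma := Real.integral_rpow_mul_exp_neg_mul_Ioi (show 0 < (k : ℝ) + 1 + β by linarith) hs
  rw [show (k : ℝ) + 1 + β - 1 = k + β by ring, one_div, Real.inv_rpow hs.le,
    ← Real.rpow_neg hs.le, show -((k : ℝ) + 1 + β) = -k - 1 - β by ring] at hgamma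
  calc ∫ t in Set.Ioi (0 : ℝ), t ^ k * Real.exp (-s * t) * f t
      ≤ ∫ t in Set.Ioi (0 : ℝ), C * (t ^ ((k : ℝ) + β) * Real.exp (-(s * t))) :=
        setIntegral_mono_on (integrableOn_pow_mul_exp_mul_of_le_rpow k hf hβ hs hf₀ hfC)
          ((integrableOn_rpow_mul_exp_neg_mul hkβ hs).const_mul C) measurableSet_Ioi
          fun t ht => pow_mul_exp_mul_le_of_le_rpow k ht (hfC t ht)
    _ = C * Real.Gamma (k + 1 + β) * s ^ (-(k : ℝ) - 1 - β) := by
        rw [integral_const_mul, hgamma]; ring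

end LaplaceMoments

theorem laplace_transform_gamma_bounds_general (α : ℝ) (hα : α ∈ Set.Ioo (0 : ℝ) 2)
    (k : ℕ) (s : ℝ) (hs : 0 < s) :
    (MeasureTheory.IntegrableOn
      (fun t : ℝ => t ^ k * Real.exp (-s * t) * gammaFn α t) (Set.Ioi 0) volume ∧
    0 ≤ ∫ t in Set.Ioi (0 : ℝ), t ^ k * Real.exp (-s * t) * gammaFn α t ∧
    (∫ t in Set.Ioi (0 : ℝ), t ^ k * Real.exp (-s * t) * gammaFn α t) ≤
      2 * Real.sqrt (2 * α) * (2 - α) * Real.Gamma ((k : ℝ) + 1 + α) / (α * π) *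
        s ^ (-(k : ℝ) - 1 - α)) ∧
    GFn α s ≤ 2 * Real.sqrt (2 * α) * (2 - α) * Real.Gamma (1 + α) / (α * π) *
      s ^ (-1 - α) := by
  have hα₁ : -1 < α := by linarith [hα.1]
  have hγ₀ : ∀ t > 0, 0 ≤ gammaFn α t := fun t ht => gammaFn_nonneg hα ht
  have hγC : ∀ t > 0, gammaFn α t ≤ 2 * Real.sqrt (2 * α) * (2 - α) / (α * π) * t ^ α :=
    fun t ht => gammaFn_le_mul_rpow hα ht
  have hmoment (j : ℕ) :
      (∫ t in Set.Ioi (0 : ℝ), t ^ j * Real.exp (-s * t) * gammaFn α t) ≤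
        2 * Real.sqrt (2 * α) * (2 - α) * Real.Gamma ((j : ℝ) + 1 + α) / (α * π) *
          s ^ (-(j : ℝ) - 1 - α) := by
    refine (setIntegral_pow_mul_exp_mul_le_of_le_rpow j measurable_gammaFn hα₁ hs hγ₀
      hγC).trans_eq ?_
    ring
  refine ⟨⟨integrableOn_pow_mul_exp_mul_of_le_rpow k measurable_gammaFn hα₁ hs hγ₀ hγC,
    setIntegral_nonneg measurableSet_Ioi fun t (ht : 0 < t) => ?_, hmoment k⟩, ?_⟩
  · have := hγ₀ t ht
    positivity
  · simpa [GFn] using hmoment 0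

/-- **Bounds on the Laplace transform of `γ` and its first two moments.**
For `α ∈ (0,2)`, `k ∈ {0,1,2}` and `s > 0`, the integral `∫₀^∞ t^k e^{−st} γ(t) dt`
converges, is nonnegative, and is at most `(2√(2α)(2−α)Γ(k+1+α)/(απ)) s^{−k−1−α}`.
In particular `G(s) ≤ (2√(2α)(2−α)Γ(1+α)/(απ)) s^{−1−α}`. -/
theorem laplace_transform_gamma_bounds (α : ℝ) (hα : α ∈ Set.Ioo (0 : ℝ) 2)
    (k : ℕ) (hk : k ≤ 2) (s : ℝ) (hs : 0 < s) :
    (MeasureTheory.IntegrableOn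
      (fun t : ℝ => t ^ k * Real.exp (-s * t) * gammaFn α t) (Set.Ioi 0) volume ∧
    0 ≤ ∫ t in Set.Ioi (0 : ℝ), t ^ k * Real.exp (-s * t) * gammaFn α t ∧
    (∫ t in Set.Ioi (0 : ℝ), t ^ k * Real.exp (-s * t) * gammaFn α t) ≤
      2 * Real.sqrt (2 * α) * (2 - α) * Real.Gamma ((k : ℝ) + 1 + α) / (α * π) *
        s ^ (-(k : ℝ) - 1 - α)) ∧
    GFn α s ≤ 2 * Real.sqrt (2 * α) * (2 - α) * Real.Gamma (1 + α) / (α * π) *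
      s ^ (-1 - α) :=
  laplace_transform_gamma_bounds_general α hα k s hs
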